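/- Let F be a field, t ≥ 1, and x_1, ..., x_{t-1} distinct nonzero elements of F. Then the map sending a polynomial P of degree at most t-1 to the pair (P(0), (P(x_1), ..., P(x_{t-1}))) is a linear bijection onto F × F^{t-1}. In particular, for a uniformly random polynomial of degree at most t-1 over a finite field F, the secret P(0) and any t-1 shares at distinct nonzero points are independent, with the shares uniform on F^{t-1}. -/

import Mathlib

theorem shamir_information_theoretic (F : Type*) [Field F] (t : ℕ) (ht : 1 ≤ t)
    (x : Fin (t - 1) → F) (hx : Function.Injective x) (hx0 : ∀ i, x i ≠ 0) :
    ∃ e : Polynomial.degreeLT F t ≃ₗ[F] (F × (Fin (t - 1) → F)),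
      ∀ P : Polynomial.degreeLT F t,
        e P = (Polynomial.eval 0 (P : Polynomial F),
          fun i => Polynomial.eval (x i) (P : Polynomial F)) := by
  classical
  -- the linear map
  let f : Polynomial.degreeLT F t →ₗ[F] (F × (Fin (t - 1) → F)) :=
    LinearMap.prod
      ((Polynomial.leval (0 : F)).comp (Polynomial.degreeLT F t).subtype)
      (LinearMap.pi fun i => (Polynomial.leval (x i)).comp (Polynomial.degreeLT F t).subtype)
  have hfapp : ∀ P : Polynomial.degreeLT F t,
      f P = (Polynomial.eval 0 (P : Polynomial F),
        fun i => Polynomial.eval (x i) (P : Polynomial F)) := fun P => rfl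
  -- injectivity
  have hinj : Function.Injective f := by
    rw [← LinearMap.ker_eq_bot, LinearMap.ker_eq_bot']
    intro P hP
    have h1 : Polynomial.eval 0 (P : Polynomial F) = 0 := congrArg Prod.fst (hfapp P ▸ hP)
    have h2 : ∀ i, Polynomial.eval (x i) (P : Polynomial F) = 0 := by
      intro i
      have := congrArg Prod.snd (hfapp P ▸ hP)
      exact congrFun this i
    -- evaluation points
    let g : Option (Fin (t - 1)) → F := fun o => o.elim 0 x
    have hg : Function.Injective g := by
      rintro (_ | i) (_ | j) h
      · rfl
      · exact absurd h.symm (hx0 j)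
      · exact absurd h (hx0 i)
      · exact congrArg some (hx h)
    have heval : ∀ o, Polynomial.eval (g o) (P : Polynomial F) = 0 := by
      rintro (_ | i)
      · exact h1
      · exact h2 i
    have hcard : (P : Polynomial F).natDegree < Fintype.card (Option (Fin (t - 1))) := by
      simp only [Fintype.card_option, Fintype.card_fin]
      rw [Nat.sub_add_cancel ht]
      by_cases h0 : (P : Polynomial F) = 0
      · simpa [h0] using (by omega : 0 < t)
      · exact (Polynomial.natDegree_lt_iff_degree_lt h0).2
          (by simpa using (Polynomial.mem_degreeLT.1 P.2))
    have := Polynomial.eq_zero_of_natDegree_lt_card_of_eval_eq_zero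
      (P : Polynomial F) hg heval hcard
    exact Subtype.ext this
  have : FiniteDimensional F (Polynomial.degreeLT F t) :=
    (Polynomial.degreeLTEquiv F t).symm.finiteDimensional
  have hrank : Module.finrank F (Polynomial.degreeLT F t)
      = Module.finrank F (F × (Fin (t - 1) → F)) := by
    rw [(Polynomial.degreeLTEquiv F t).finrank_eq]
    simp only [Module.finrank_pi, Module.finrank_prod, Module.finrank_self, Fintype.card_fin]; omega
  exact ⟨f.linearEquivOfInjective hinj hrank, fun P => by
    rw [LinearMap.linearEquivOfInjective_apply]; exact hfapp P⟩
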